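/- If p is bilevel feasible, witnessed by toll vector T, then for every other s-t path q that uses a subset of p's tolled arcs, the base cost of q is at least the base cost of p minus the total toll p pays on tolled arcs not used by q; in particular, if two distinct bilevel feasible paths have the same set of tolled arcs, their cost difference under any toll vector equals the difference of their base costs, so at most one of them can be the unique optimum for any given toll vector. -/

import Mathlib

/-!
Optimality of `p` against `q` reads `c(p) + T(p ∩ A1) ≤ c(q) + T(q ∩ A1)`; when `q ∩ A1 ⊆ p ∩ A1`
the tolls on `q ∩ A1` cancel, leaving `c(p) + T((p ∩ A1) \ (q ∩ A1)) ≤ c(q)`. Paths with the same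
tolled arcs pay the same tolls, so tolls cancel from their cost difference; and two distinct
points can never both be strict minimisers of the same function.
-/

theorem Finset.add_sum_sdiff_le_of_add_sum_le {ι M : Type*} [DecidableEq ι] [AddCommGroup M] [PartialOrder M]
    [IsOrderedAddMonoid M] {s t : Finset ι} (hts : t ⊆ s) {f : ι → M} {x y : M}
    (h : x + ∑ i ∈ s, f i ≤ y + ∑ i ∈ t, f i) : x + ∑ i ∈ s \ t, f i ≤ y := by
  rw [← Finset.sum_sdiff hts, ← add_assoc] at h
  exact le_of_add_le_add_right h

theorem not_isStrictMinOn_pair {α β : Type*} [Preorder β] (f : α → β) {s : Set α} {p q : α}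
    (hp : p ∈ s) (hq : q ∈ s) (hne : p ≠ q) :
    ¬ ((∀ r ∈ s, r ≠ p → f p < f r) ∧ (∀ r ∈ s, r ≠ q → f q < f r)) :=
  fun ⟨hpmin, hqmin⟩ => (hpmin q hq hne.symm).asymm (hqmin p hp hne)

theorem bilevel_feasible_bound_general {A : Type*} [DecidableEq A]
    (A1 : Finset A) (c : A → ℝ)
    (P : Finset (Finset A)) (p q : Finset A) (hp : p ∈ P) (hq : q ∈ P)
    (T : A → ℝ) (hT : ∀ a, 0 ≤ T a)
    (hopt : ∀ r ∈ P, (∑ a ∈ p, c a + ∑ a ∈ p ∩ A1, T a) ≤ (∑ a ∈ r, c a + ∑ a ∈ r ∩ A1, T a)) :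
    ((q ∩ A1 ⊆ p ∩ A1) →
      (∑ a ∈ p, c a) - ∑ a ∈ (p ∩ A1) \ (q ∩ A1), T a ≤ ∑ a ∈ q, c a) ∧
    (p ∩ A1 = q ∩ A1 →
      ∀ T' : A → ℝ,
        (∑ a ∈ p, c a + ∑ a ∈ p ∩ A1, T' a) - (∑ a ∈ q, c a + ∑ a ∈ q ∩ A1, T' a)
          = (∑ a ∈ p, c a) - (∑ a ∈ q, c a)) ∧
    (p ∩ A1 = q ∩ A1 → p ≠ q →
      ¬ ((∀ r ∈ P, r ≠ p → (∑ a ∈ p, c a + ∑ a ∈ p ∩ A1, T a) < (∑ a ∈ r, c a + ∑ a ∈ r ∩ A1, T a)) ∧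
         (∀ r ∈ P, r ≠ q → (∑ a ∈ q, c a + ∑ a ∈ q ∩ A1, T a) < (∑ a ∈ r, c a + ∑ a ∈ r ∩ A1, T a)))) := by
  refine ⟨fun hsub => ?_, fun heq T' => ?_, fun _ hne => ?_⟩
  · have hsaving := Finset.add_sum_sdiff_le_of_add_sum_le hsub (hopt q hq)
    have htolls : 0 ≤ ∑ a ∈ (p ∩ A1) \ (q ∩ A1), T a := Finset.sum_nonneg fun a _ => hT a
    linarith
  · rw [heq]
    exact add_sub_add_right_eq_sub _ _ _
  · exact not_isStrictMinOn_pair (fun r => ∑ a ∈ r, c a + ∑ a ∈ r ∩ A1, T a)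
      (s := ↑P) hp hq hne

/-- If `p` is bilevel feasible witnessed by tolls `T`, then any path `q` using a
subset of `p`'s tolled arcs has base cost at least the base cost of `p` minus the
tolls `p` pays on tolled arcs not used by `q`.  Moreover, two paths with the same
tolled-arc set have, under any toll vector, a cost difference equal to the difference
of their base costs; hence at most one of two distinct such paths can be the unique
optimum for a given toll vector. -/
theorem bilevel_feasible_bound {A : Type*} [DecidableEq A]
    (A1 : Finset A) (c : A → ℝ) (hc : ∀ a, 0 < c a)
    (P : Finset (Finset A)) (p q : Finset A) (hp : p ∈ P) (hq : q ∈ P)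
    (T : A → ℝ) (hT : ∀ a, 0 ≤ T a)
    (hopt : ∀ r ∈ P, (∑ a ∈ p, c a + ∑ a ∈ p ∩ A1, T a) ≤ (∑ a ∈ r, c a + ∑ a ∈ r ∩ A1, T a)) :
    ((q ∩ A1 ⊆ p ∩ A1) →
      (∑ a ∈ p, c a) - ∑ a ∈ (p ∩ A1) \ (q ∩ A1), T a ≤ ∑ a ∈ q, c a) ∧
    (p ∩ A1 = q ∩ A1 →
      ∀ T' : A → ℝ,
        (∑ a ∈ p, c a + ∑ a ∈ p ∩ A1, T' a) - (∑ a ∈ q, c a + ∑ a ∈ q ∩ A1, T' a)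
          = (∑ a ∈ p, c a) - (∑ a ∈ q, c a)) ∧
    (p ∩ A1 = q ∩ A1 → p ≠ q →
      ¬ ((∀ r ∈ P, r ≠ p → (∑ a ∈ p, c a + ∑ a ∈ p ∩ A1, T a) < (∑ a ∈ r, c a + ∑ a ∈ r ∩ A1, T a)) ∧
         (∀ r ∈ P, r ≠ q → (∑ a ∈ q, c a + ∑ a ∈ q ∩ A1, T a) < (∑ a ∈ r, c a + ∑ a ∈ r ∩ A1, T a)))) :=
  bilevel_feasible_bound_general A1 c P p q hp hq T hT hopt
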